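/- arXiv:1609.01037 — 4 statements merged into one kernel-verified Lean document; each statement's English description precedes it below -/
import Mathlib

section
/- Let x_1, ..., x_{m+1} be sampled i.i.d. from a distribution D over R^d. Then the sum over j from 1 to m+1 of the probability that x_j is not in the linear span of x_1,...,x_{j-1} is at most d. -/
/-!
The indices `j` at which `x j` leaves the span of its predecessors carry a linearly independent
subfamily, so for every sample at most `d` of the events occur. Summing the indicators and
integrating gives the bound; the only analytic input is that each event is Borel, which holds
because membership in a span is the projection of a closed, hence σ-compact, set of
(coefficients, sample) pairs.
-/

open MeasureTheory Set Submodule Finset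
open scoped ENNReal

lemma IsSigmaCompact.measurableSet {X : Type*} [TopologicalSpace X] [T2Space X]
    [MeasurableSpace X] [OpensMeasurableSpace X] {s : Set X} (hs : IsSigmaCompact s) :
    MeasurableSet s := by
  obtain ⟨K, hK, rfl⟩ := hs
  exact .iUnion fun n => (hK n).isClosed.measurableSet

lemma measurableSet_setOf_mem_span {ι E : Type*} [Fintype ι] [NormedAddCommGroup E]
    [NormedSpace ℝ E] [FiniteDimensional ℝ E]
    [MeasurableSpace E] [BorelSpace E] (s : Set ι) (j : ι) :
    MeasurableSet {x : ι → E | x j ∈ span ℝ (x '' s)} := by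
  classical
  have hproj : {x : ι → E | x j ∈ span ℝ (x '' s)} =
      Prod.snd '' {p : (s → ℝ) × (ι → E) | ∑ i, p.1 i • p.2 i = p.2 j} := by
    ext x
    simp [Fintype.mem_span_image_iff_exists_fun]
  have hclosed : IsClosed {p : (s → ℝ) × (ι → E) | ∑ i, p.1 i • p.2 i = p.2 j} :=
    isClosed_eq (by fun_prop) (by fun_prop)
  rw [hproj]
  exact ((isSigmaCompact_univ.of_isClosed_subset hclosed (subset_univ _)).image
    continuous_snd).measurableSet

lemma linearIndepOn_of_notMem_span_Iio {K V ι : Type*} [DivisionRing K] [AddCommGroup V]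
    [Module K V] [LinearOrder ι] {v : ι → V} {s : Finset ι}
    (hs : ∀ j ∈ s, v j ∉ span K (v '' Set.Iio j)) : LinearIndepOn K v s := by
  classical
  induction s using Finset.induction_on_max with
  | empty => simp
  | insert j s hlt ih =>
    rw [Finset.coe_insert]
    refine (ih fun i hi => hs i (mem_insert_of_mem hi)).insert fun hj => ?_
    exact hs j (mem_insert_self j s) (span_mono (image_mono hlt) hj)

open Classical in
lemma card_filter_notMem_span_Iio_le_finrank {K V ι : Type*} [DivisionRing K] [AddCommGroup V]
    [Module K V] [FiniteDimensional K V] [LinearOrder ι] [Fintype ι] (v : ι → V) :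
    #{j | v j ∉ span K (v '' Set.Iio j)} ≤ Module.finrank K V := by
  have hli := linearIndepOn_of_notMem_span_Iio (K := K)
    (s := {j | v j ∉ span K (v '' Set.Iio j)}) fun j hj => (mem_filter.1 hj).2
  simpa using hli.linearIndependent.fintype_card_le_finrank

open Classical in
lemma sum_measure_le_mul_measure_univ_of_forall_card_le {α ι : Type*} [MeasurableSpace α]
    (μ : Measure α) (s : Finset ι) (A : ι → Set α) (hA : ∀ i ∈ s, NullMeasurableSet (A i) μ)
    (N : ℕ) (hN : ∀ x, #{i ∈ s | x ∈ A i} ≤ N) : ∑ i ∈ s, μ (A i) ≤ N * μ univ := by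
  calc ∑ i ∈ s, μ (A i) = ∑ i ∈ s, ∫⁻ x, (A i).indicator 1 x ∂μ :=
        Finset.sum_congr rfl fun i hi => (lintegral_indicator_one₀ (hA i hi)).symm
    _ = ∫⁻ x, ∑ i ∈ s, (A i).indicator 1 x ∂μ :=
        (lintegral_finsetSum' _ fun i hi => (aemeasurable_one.indicator₀ (hA i hi))).symm
    _ ≤ ∫⁻ _, (N : ℝ≥0∞) ∂μ := lintegral_mono fun x => by
        simpa [Finset.sum_indicator_eq_sum_filter] using hN x
    _ = N * μ univ := lintegral_const _

/-- Let x_1, ..., x_{m+1} be sampled i.i.d. from a distribution D over R^d. Then the sum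
over j of the probability that x_j is not in the linear span of x_1,...,x_{j-1} is at
most d. -/
theorem sum_prob_not_in_span_le_dim (d m : ℕ) (D : Measure (Fin d → ℝ))
    [IsProbabilityMeasure D] :
    ∑ j : Fin (m + 1),
      (Measure.pi fun _ : Fin (m + 1) => D)
        {x : Fin (m + 1) → Fin d → ℝ |
          x j ∉ Submodule.span ℝ (x '' {i : Fin (m + 1) | i < j})} ≤ (d : ℝ≥0∞) := by
  have hmeas (j : Fin (m + 1)) :
      MeasurableSet {x : Fin (m + 1) → Fin d → ℝ | x j ∉ span ℝ (x '' Set.Iio j)} :=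
    (measurableSet_setOf_mem_span _ j).compl
  calc _ ≤ d * (Measure.pi fun _ : Fin (m + 1) => D) univ :=
        sum_measure_le_mul_measure_univ_of_forall_card_le _ univ _
          (fun j _ => (hmeas j).nullMeasurableSet) d fun x => by
            convert (card_filter_notMem_span_Iio_le_finrank x).trans_eq (Module.finrank_fin_fun ℝ)
    _ = d := by simp
end

section
/- Let (a_z)_{z in Z} be complex numbers indexed by integers with sum of |a_z|^2 at most 1, and let epsilon: (0,infinity) -> [0,1] be any function. Then the double sum over all pairs of distinct integers z_1 != z_2 of |a_{z_1}| * |a_{z_2}| * epsilon(r * |z_1 - z_2|) is at most 2 * sum_{n=1}^infinity epsilon(n*r), for any r > 0. -/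
open scoped ENNReal

/-- Let (a_z) be complex numbers indexed by ℤ with ∑ |a_z|² ≤ 1, and ε : (0,∞) → [0,1].
Then ∑_{z₁ ≠ z₂} |a_{z₁}| |a_{z₂}| ε(r |z₁ - z₂|) ≤ 2 ∑_{n ≥ 1} ε(n r) for any r > 0. -/
theorem double_sum_coeff_bound (a : ℤ → ℂ)
    (ha : ∑' z : ℤ, ENNReal.ofReal (‖a z‖^2) ≤ 1)
    (ε : ℝ → ℝ) (hε : ∀ x : ℝ, 0 < x → ε x ∈ Set.Icc (0 : ℝ) 1)
    (r : ℝ) (hr : 0 < r) :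
    ∑' p : ℤ × ℤ,
        (if p.1 ≠ p.2 then
          ENNReal.ofReal (‖a p.1‖ * ‖a p.2‖ * ε (r * |(p.1 : ℝ) - (p.2 : ℝ)|)) else 0)
      ≤ 2 * ∑' n : ℕ, ENNReal.ofReal (ε (r * (n + 1))) := by
  set A : ℤ → ℝ≥0∞ := fun z => ENNReal.ofReal (‖a z‖^2) with hA
  set E : ℤ × ℤ → ℝ≥0∞ := fun p =>
    if p.1 ≠ p.2 then ENNReal.ofReal (ε (r * |(p.1 : ℝ) - (p.2 : ℝ)|)) else 0 with hE
  have hεpos : ∀ x : ℝ, 0 < x → 0 ≤ ε x := fun x hx => (hε x hx).1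
  -- the inner sum over the second index equals 2 * T
  have hinner : ∀ z1 : ℤ,
      ∑' z2 : ℤ, E (z1, z2) = 2 * ∑' n : ℕ, ENNReal.ofReal (ε (r * (n + 1))) := by
    intro z1
    set g : ℤ → ℝ≥0∞ := fun d => if d ≠ 0 then ENNReal.ofReal (ε (r * |(d : ℝ)|)) else 0 with hg
    have h1 : ∑' z2 : ℤ, E (z1, z2) = ∑' d : ℤ, E (z1, z1 - d) :=
      ((Equiv.subLeft z1).tsum_eq fun z2 => E (z1, z2)).symm
    have h2 : ∀ d : ℤ, E (z1, z1 - d) = g d := by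
      intro d
      have hcast : ((z1 : ℝ) - ((z1 - d : ℤ) : ℝ)) = (d : ℝ) := by push_cast; ring
      by_cases hd : d = 0
      · simp [hE, hg, hd]
      · have hne : z1 ≠ z1 - d := by omega
        simp only [hE, hg, ne_eq, hne, not_false_eq_true, if_true, hd, if_pos, hcast]
    rw [h1, tsum_congr h2, tsum_of_nat_of_neg_add_one ENNReal.summable ENNReal.summable]
    have h3 : ∑' n : ℕ, g ((n : ℤ)) = ∑' n : ℕ, ENNReal.ofReal (ε (r * (n + 1))) := by
      rw [tsum_eq_zero_add' ENNReal.summable]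
      have hg0 : g 0 = 0 := by simp [hg]
      rw [show ((0:ℕ):ℤ) = 0 from rfl, hg0, zero_add]
      refine tsum_congr fun n => ?_
      have h0 : ((n + 1 : ℕ) : ℤ) ≠ 0 := by omega
      have habs : |(((n + 1 : ℕ) : ℤ) : ℝ)| = (n : ℝ) + 1 := by
        push_cast; rw [abs_of_nonneg (by positivity)]
      simp only [hg, ne_eq, h0, not_false_eq_true, if_true, habs]
    have h4 : ∑' n : ℕ, g (-((n : ℤ) + 1)) = ∑' n : ℕ, ENNReal.ofReal (ε (r * (n + 1))) := by
      refine tsum_congr fun n => ?_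
      have h0 : (-((n : ℤ) + 1)) ≠ 0 := by omega
      have habs : |((-((n : ℤ) + 1) : ℤ) : ℝ)| = (n : ℝ) + 1 := by
        push_cast; rw [abs_neg, abs_of_nonneg (by positivity)]
      simp only [hg, ne_eq, h0, not_false_eq_true, if_true, habs]
    rw [h3, h4, two_mul]
  -- symmetry of E
  have hEsymm : ∀ p : ℤ × ℤ, E p.swap = E p := by
    rintro ⟨z1, z2⟩
    simp only [hE, Prod.swap_prod_mk]
    rw [abs_sub_comm ((z2 : ℝ)) ((z1 : ℝ))]
    by_cases h : z1 = z2 <;> simp [h, eq_comm]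
  -- pointwise bound via 2xy ≤ x² + y²
  have hpt : ∀ p : ℤ × ℤ,
      (if p.1 ≠ p.2 then
        ENNReal.ofReal (‖a p.1‖ * ‖a p.2‖ * ε (r * |(p.1 : ℝ) - (p.2 : ℝ)|)) else 0)
      ≤ 2⁻¹ * ((A p.1 + A p.2) * E p) := by
    rintro ⟨z1, z2⟩
    by_cases h : z1 = z2
    · simp [h]
    · have hne : z1 ≠ z2 := h
      set x := ‖a z1‖
      set y := ‖a z2‖
      set u := r * |(z1 : ℝ) - (z2 : ℝ)| with hu
      have hupos : 0 < u := by
        apply mul_pos hr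
        rw [abs_pos, sub_ne_zero]
        exact_mod_cast fun hc => hne (by exact_mod_cast hc)
      have hε0 : 0 ≤ ε u := hεpos u hupos
      simp only [hE, hA, if_pos hne, ne_eq, not_false_eq_true]
      have key : x * y * ε u * 2 ≤ (x ^ 2 + y ^ 2) * ε u := by
        nlinarith [sq_nonneg (x - y), hε0]
      calc ENNReal.ofReal (x * y * ε u)
          = 2⁻¹ * (2 * ENNReal.ofReal (x * y * ε u)) := by
            rw [← mul_assoc, ENNReal.inv_mul_cancel (by norm_num) (by norm_num), one_mul]
        _ = 2⁻¹ * ENNReal.ofReal (x * y * ε u * 2) := by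
            rw [ENNReal.ofReal_mul' (by norm_num : (0:ℝ) ≤ 2), ENNReal.ofReal_ofNat,
              mul_comm (ENNReal.ofReal (x * y * ε u)) 2]
        _ ≤ 2⁻¹ * ENNReal.ofReal ((x ^ 2 + y ^ 2) * ε u) :=
            mul_le_mul_right (ENNReal.ofReal_le_ofReal key) _
        _ = 2⁻¹ * ((ENNReal.ofReal (x ^ 2) + ENNReal.ofReal (y ^ 2)) * ENNReal.ofReal (ε u)) := by
            rw [ENNReal.ofReal_mul (by positivity),
              ENNReal.ofReal_add (by positivity) (by positivity)]
  calc ∑' p : ℤ × ℤ,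
        (if p.1 ≠ p.2 then
          ENNReal.ofReal (‖a p.1‖ * ‖a p.2‖ * ε (r * |(p.1 : ℝ) - (p.2 : ℝ)|)) else 0)
      ≤ ∑' p : ℤ × ℤ, 2⁻¹ * ((A p.1 + A p.2) * E p) := ENNReal.tsum_le_tsum hpt
    _ = 2⁻¹ * (∑' p : ℤ × ℤ, A p.1 * E p + ∑' p : ℤ × ℤ, A p.2 * E p) := by
        rw [ENNReal.tsum_mul_left]
        congr 1
        simp_rw [add_mul]
        rw [ENNReal.tsum_add]
    _ = 2⁻¹ * (∑' p : ℤ × ℤ, A p.1 * E p + ∑' p : ℤ × ℤ, A p.1 * E p) := by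
        congr 2
        rw [← (Equiv.prodComm ℤ ℤ).tsum_eq (fun p => A p.1 * E p)]
        refine tsum_congr fun p => ?_
        simp only [Equiv.prodComm_apply]
        rw [← hEsymm p]
        rfl
    _ = ∑' p : ℤ × ℤ, A p.1 * E p := by
        rw [← two_mul, ← mul_assoc, ENNReal.inv_mul_cancel (by norm_num) (by norm_num), one_mul]
    _ = ∑' z1 : ℤ, A z1 * ∑' z2 : ℤ, E (z1, z2) := by
        rw [ENNReal.tsum_prod']
        exact tsum_congr fun z1 =>
          show ∑' z2 : ℤ, A z1 * E (z1, z2) = A z1 * ∑' z2 : ℤ, E (z1, z2) from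
            ENNReal.tsum_mul_left
    _ = (∑' z1 : ℤ, A z1) * (2 * ∑' n : ℕ, ENNReal.ofReal (ε (r * (n + 1)))) := by
        simp_rw [hinner]
        exact ENNReal.tsum_mul_right
    _ ≤ 1 * (2 * ∑' n : ℕ, ENNReal.ofReal (ε (r * (n + 1)))) := mul_le_mul_left ha _
    _ = 2 * ∑' n : ℕ, ENNReal.ofReal (ε (r * (n + 1))) := one_mul _
end

section
/- For any r > 0 and any collection W of vectors in R^d satisfying: every w in W has norm 2r, and for distinct w, w' in W, |<w, w'>| < 2r^2, the sets A_w = {x in R^d : there exists a nonzero integer z with |x - z*w| < r} are pairwise disjoint as w ranges over W. -/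
open RealInnerProductSpace

lemma one_add_abs_mul_le_sq_add_sq {a b : ℝ} (ha : 1 ≤ |a|) (hb : 1 ≤ |b|) :
    1 + |a * b| ≤ a ^ 2 + b ^ 2 := by
  rw [abs_mul]
  nlinarith [sq_nonneg (|a| - |b|), sq_abs a, sq_abs b]

/-- Expanding `‖a • v - b • w‖²`, the cross term is less than `|a b| ‖v‖²`, and the remaining
`a² + b² - |a b|` is at least `1`. -/
lemma norm_lt_norm_smul_sub_smul {E : Type*} [NormedAddCommGroup E] [InnerProductSpace ℝ E]
    {v w : E} {a b : ℝ} (hw : ‖w‖ = ‖v‖) (hvw : 2 * |⟪v, w⟫| < ‖v‖ ^ 2)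
    (ha : 1 ≤ |a|) (hb : 1 ≤ |b|) : ‖v‖ < ‖a • v - b • w‖ := by
  have hexpand : ‖a • v - b • w‖ ^ 2 = (a ^ 2 + b ^ 2) * ‖v‖ ^ 2 - 2 * (a * b) * ⟪v, w⟫ := by
    rw [norm_sub_sq_real, real_inner_smul_left, real_inner_smul_right, norm_smul, norm_smul, hw,
      Real.norm_eq_abs, Real.norm_eq_abs, mul_pow, mul_pow, sq_abs, sq_abs]
    ring
  have hab : 1 ≤ |a * b| := by rw [abs_mul]; nlinarith
  have hcross : 2 * (a * b) * ⟪v, w⟫ < |a * b| * ‖v‖ ^ 2 :=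
    calc 2 * (a * b) * ⟪v, w⟫ ≤ |a * b| * (2 * |⟪v, w⟫|) := by
          linarith [le_abs_self (a * b * ⟪v, w⟫), abs_mul (a * b) ⟪v, w⟫]
      _ < |a * b| * ‖v‖ ^ 2 := by gcongr
  have hcoeff := one_add_abs_mul_le_sq_add_sq ha hb
  have hlt : ‖v‖ ^ 2 < ‖a • v - b • w‖ ^ 2 := by nlinarith [sq_nonneg ‖v‖]
  exact lt_of_pow_lt_pow_left₀ 2 (norm_nonneg _) hlt

lemma one_le_abs_intCast {z : ℤ} (hz : z ≠ 0) : (1 : ℝ) ≤ |(z : ℝ)| := by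
  exact_mod_cast Int.one_le_abs hz

theorem balls_around_multiples_disjoint_general (d : ℕ) (r : ℝ)
    (W : Set (EuclideanSpace ℝ (Fin d)))
    (hnorm : ∀ w ∈ W, ‖w‖ = 2 * r)
    (hip : ∀ w ∈ W, ∀ u ∈ W, w ≠ u → |(inner ℝ w u : ℝ)| < 2 * r^2) :
    ∀ w ∈ W, ∀ u ∈ W, w ≠ u →
      Disjoint {x : EuclideanSpace ℝ (Fin d) | ∃ z : ℤ, z ≠ 0 ∧ ‖x - (z : ℝ) • w‖ < r}
               {x : EuclideanSpace ℝ (Fin d) | ∃ z : ℤ, z ≠ 0 ∧ ‖x - (z : ℝ) • u‖ < r} := by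
  intro w hw u hu hwu
  rw [Set.disjoint_left]
  rintro x ⟨m, hm, hxm⟩ ⟨n, hn, hxn⟩
  have hw' := hnorm w hw
  have hfar : 2 * r < ‖(m : ℝ) • w - (n : ℝ) • u‖ := by
    rw [← hw']
    refine norm_lt_norm_smul_sub_smul (by rw [hw', hnorm u hu]) ?_
      (one_le_abs_intCast hm) (one_le_abs_intCast hn)
    rw [hw']
    linarith [hip w hw u hu hwu]
  have hnear : ‖(m : ℝ) • w - (n : ℝ) • u‖ < 2 * r := by
    refine (norm_sub_le_norm_sub_add_norm_sub _ x _).trans_lt ?_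
    rw [norm_sub_rev]
    linarith
  exact hnear.not_gt hfar

/-- For any r > 0 and any collection W of vectors in ℝ^d with every w ∈ W of norm 2r and
|⟨w,u⟩| < 2r² for distinct w, u ∈ W, the sets
A_w = {x : ∃ nonzero integer z, |x - z w| < r} are pairwise disjoint. -/
theorem balls_around_multiples_disjoint (d : ℕ) (r : ℝ) (hr : 0 < r)
    (W : Set (EuclideanSpace ℝ (Fin d)))
    (hnorm : ∀ w ∈ W, ‖w‖ = 2 * r)
    (hip : ∀ w ∈ W, ∀ u ∈ W, w ≠ u → |(inner ℝ w u : ℝ)| < 2 * r^2) :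
    ∀ w ∈ W, ∀ u ∈ W, w ≠ u →
      Disjoint {x : EuclideanSpace ℝ (Fin d) | ∃ z : ℤ, z ≠ 0 ∧ ‖x - (z : ℝ) • w‖ < r}
               {x : EuclideanSpace ℝ (Fin d) | ∃ z : ℤ, z ≠ 0 ∧ ‖x - (z : ℝ) • u‖ < r} :=
  balls_around_multiples_disjoint_general d r W hnorm hip
end

section
/- For nonzero integers z_1, z_2 and vectors w, w' in R^d each of norm 2r, if |z_1 * w - z_2 * w'| < 2r then |<w, w'>| >= 2 r^2. -/
open RealInnerProductSpace

/-- Expanding the square, `(a² + b²) ρ² - 2ab⟪w, u⟫ < ρ²`, while `2ab⟪w, u⟫ ≤ 2|ab| |⟪w, u⟫|` and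
`|a|² + |b|² - 1 ≥ |a| |b|` when `|a|, |b| ≥ 1` (AM-GM). -/
theorem sq_div_two_lt_abs_inner_of_norm_smul_sub_smul_lt {E : Type*} [NormedAddCommGroup E]
    [InnerProductSpace ℝ E] {a b ρ : ℝ} {w u : E} (ha : 1 ≤ |a|) (hb : 1 ≤ |b|)
    (hw : ‖w‖ = ρ) (hu : ‖u‖ = ρ) (h : ‖a • w - b • u‖ < ρ) :
    ρ ^ 2 / 2 < |⟪w, u⟫| := by
  have hexpand : ‖a • w - b • u‖ ^ 2 = (|a| ^ 2 + |b| ^ 2) * ρ ^ 2 - 2 * (a * b) * ⟪w, u⟫ := by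
    rw [norm_sub_sq_real, norm_smul, norm_smul, real_inner_smul_left, real_inner_smul_right,
      hw, hu, Real.norm_eq_abs, Real.norm_eq_abs]
    ring
  have hsq : ‖a • w - b • u‖ ^ 2 < ρ ^ 2 := by
    gcongr
  have hinner : a * b * ⟪w, u⟫ ≤ |a| * |b| * |⟪w, u⟫| := by
    rw [← abs_mul, ← abs_mul]
    exact le_abs_self _
  have hamgm : |a| * |b| ≤ |a| ^ 2 + |b| ^ 2 - 1 := by
    nlinarith [sq_nonneg (|a| - |b|)]
  have hab : 0 < |a| * |b| := by positivity
  refine lt_of_mul_lt_mul_left ?_ hab.le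
  calc |a| * |b| * (ρ ^ 2 / 2) ≤ (|a| ^ 2 + |b| ^ 2 - 1) * (ρ ^ 2 / 2) := by gcongr
    _ < |a| * |b| * |⟪w, u⟫| := by linarith

theorem inner_ge_of_close_multiples_general (d : ℕ) (r : ℝ)
    (w u : EuclideanSpace ℝ (Fin d)) (hw : ‖w‖ = 2 * r) (hu : ‖u‖ = 2 * r)
    (z₁ z₂ : ℤ) (hz₁ : z₁ ≠ 0) (hz₂ : z₂ ≠ 0)
    (hclose : ‖(z₁ : ℝ) • w - (z₂ : ℝ) • u‖ < 2 * r) :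
    |(inner ℝ w u : ℝ)| ≥ 2 * r^2 := by
  have h₁ : 1 ≤ |(z₁ : ℝ)| := by exact_mod_cast Int.one_le_abs hz₁
  have h₂ : 1 ≤ |(z₂ : ℝ)| := by exact_mod_cast Int.one_le_abs hz₂
  have key := sq_div_two_lt_abs_inner_of_norm_smul_sub_smul_lt h₁ h₂ hw hu hclose
  linarith

/-- For nonzero integers z₁, z₂ and vectors w, u ∈ ℝ^d each of norm 2r, if
‖z₁ w - z₂ u‖ < 2r then |⟨w, u⟩| ≥ 2r². -/
theorem inner_ge_of_close_multiples (d : ℕ) (r : ℝ) (hr : 0 < r)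
    (w u : EuclideanSpace ℝ (Fin d)) (hw : ‖w‖ = 2 * r) (hu : ‖u‖ = 2 * r)
    (z₁ z₂ : ℤ) (hz₁ : z₁ ≠ 0) (hz₂ : z₂ ≠ 0)
    (hclose : ‖(z₁ : ℝ) • w - (z₂ : ℝ) • u‖ < 2 * r) :
    |(inner ℝ w u : ℝ)| ≥ 2 * r^2 :=
  inner_ge_of_close_multiples_general d r w u hw hu z₁ z₂ hz₁ hz₂ hclose
end
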